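/- arXiv:1212.1251 — 2 statements merged into one kernel-verified Lean document; each statement's English description precedes it below -/
import Mathlib

section
/- For every finite DTMDP with uniformisation rate q > 0, time bound t ≥ 0, reward structure (c, f) and every initial state s0, the supremum of V(σ, s0) over all history-dependent randomised (HR) schedulers σ equals the supremum of V(σ', s0) over all counting randomised (CR) schedulers σ'. -/
/-!
The value of a scheduler depends on it only through its transient distributions, and HR and CR
schedulers realise the same transient distributions. A CR scheduler is the HR scheduler that reads
only the current state and the length of the history. Conversely, an HR scheduler `σ` yields the
CR scheduler choosing `a` in `s` at step `n` with the conditional probability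
`P(X_n = s, a_n = a) / P(X_n = s)`; an induction on `n` shows that it has the same transient
distributions as `σ`.
-/

open scoped BigOperators

namespace TR

variable {S A : Type} [Fintype S] [Fintype A] [DecidableEq S] [DecidableEq A]

/-- Poisson probabilities `φ_λ(i) = λ^i/i! · e^{−λ}`. -/
noncomputable def phi (lam : ℝ) (i : ℕ) : ℝ :=
  lam ^ i / (Nat.factorial i : ℝ) * Real.exp (-lam)

/-- `ψ_λ(i) = 1 − Σ_{j=0}^{i} φ_λ(j)`. -/
noncomputable def psi (lam : ℝ) (i : ℕ) : ℝ :=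
  1 - ∑ j ∈ Finset.range (i + 1), phi lam j

/-- Action `a` is enabled in state `s`. -/
def Enabled (P : S → A → S → ℝ) (s : S) (a : A) : Prop :=
  ∑ s', P s a s' = 1

/-- `P` is the transition function of a finite DTMDP. -/
def IsDTMDP (P : S → A → S → ℝ) : Prop :=
  (∀ s a s', 0 ≤ P s a s') ∧
  (∀ s a, (∑ s', P s a s') = 0 ∨ (∑ s', P s a s') = 1) ∧
  (∀ s, ∃ a, Enabled P s a)

/-- History-dependent randomised scheduler.  A history is encoded as a pair of
a list of (state, action) pairs (most recent first) and the current state. -/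
def IsHR (P : S → A → S → ℝ) (sch : List (S × A) × S → A → ℝ) : Prop :=
  (∀ h a, 0 ≤ sch h a) ∧ (∀ h, ∑ a, sch h a = 1) ∧
  (∀ h a, 0 < sch h a → Enabled P h.2 a)

/-- Probability of the path recorded in the given history (of length `n`,
starting at `s0`) under the HR scheduler `sch`. -/
noncomputable def hrHistProb (P : S → A → S → ℝ) (sch : List (S × A) × S → A → ℝ)
    (s0 : S) : ℕ → List (S × A) × S → ℝ
  | 0, h => if h.1 = [] ∧ h.2 = s0 then 1 else 0
  | _ + 1, ([], _) => 0
  | n + 1, ((s, a) :: rest, s') =>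
      hrHistProb P sch s0 n (rest, s) * sch (rest, s) a * P s a s'

/-- Transient probability `tprob^σ(s0, n, s)`: total probability of all paths of
length `n` from `s0` ending in `s`. -/
noncomputable def hrProb (P : S → A → S → ℝ) (sch : List (S × A) × S → A → ℝ)
    (s0 : S) (n : ℕ) (s : S) : ℝ :=
  ∑' l : List (S × A), hrHistProb P sch s0 n (l, s)

/-- Counting randomised scheduler. -/
def IsCR (P : S → A → S → ℝ) (sch : S → ℕ → A → ℝ) : Prop :=
  (∀ s n a, 0 ≤ sch s n a) ∧ (∀ s n, ∑ a, sch s n a = 1) ∧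
  (∀ s n a, 0 < sch s n a → Enabled P s a)

/-- Transient distribution of a CR scheduler. -/
noncomputable def crProb (P : S → A → S → ℝ) (sch : S → ℕ → A → ℝ) (s0 : S) :
    ℕ → S → ℝ
  | 0 => fun s => if s = s0 then 1 else 0
  | n + 1 => fun s' => ∑ s, crProb P sch s0 n s * ∑ a, sch s n a * P s a s'

/-- Counting deterministic scheduler. -/
def IsCD (P : S → A → S → ℝ) (d : S → ℕ → A) : Prop :=
  ∀ s n, Enabled P s (d s n)

/-- Transient distribution of a CD scheduler. -/
noncomputable def cdProb (P : S → A → S → ℝ) (d : S → ℕ → A) (s0 : S) :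
    ℕ → S → ℝ
  | 0 => fun s => if s = s0 then 1 else 0
  | n + 1 => fun s' => ∑ s, cdProb P d s0 n s * P s (d s n) s'

/-- The value `V = Σ_i [ φ_{qt}(i)·Σ_s p_i(s)·f(s) + ψ_{qt}(i)·Σ_s p_i(s)·c(s)/q ]`
of transient distributions `p` w.r.t. uniformisation rate `q`, time bound `t`
and rewards `(c, f)`. -/
noncomputable def value (q t : ℝ) (c f : S → ℝ) (p : ℕ → S → ℝ) : ℝ :=
  ∑' i : ℕ, (phi (q * t) i * ∑ s, p i s * f s
    + psi (q * t) i * ∑ s, p i s * (c s / q))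

/-- Value-iteration vectors of a CR scheduler: `crVI … k j` is `q_{k+1-j}`,
i.e. `crVI … k 0 = q_{k+1} ≡ 0` and `crVI … k (k+1) = q_0`. -/
noncomputable def crVI (P : S → A → S → ℝ) (sch : S → ℕ → A → ℝ)
    (q t : ℝ) (c f : S → ℝ) (k : ℕ) : ℕ → S → ℝ
  | 0 => fun _ => 0
  | j + 1 => fun s =>
      (∑ a, sch s (k - j) a * ∑ s', P s a s' * crVI P sch q t c f k j s')
      + phi (q * t) (k - j) * f s + psi (q * t) (k - j) * (c s / q)

/-- Maximising value-iteration vectors: `maxVI … k j` is `q'_{k+1-j}`,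
i.e. `maxVI … k 0 = q'_{k+1} ≡ 0` and `maxVI … k (k+1) = q'_0`. -/
noncomputable def maxVI (P : S → A → S → ℝ)
    (q t : ℝ) (c f : S → ℝ) (k : ℕ) : ℕ → S → ℝ
  | 0 => fun _ => 0
  | j + 1 => fun s =>
      sSup {x : ℝ | ∃ a, Enabled P s a ∧
        x = ∑ s', P s a s' * maxVI P q t c f k j s'}
      + phi (q * t) (k - j) * f s + psi (q * t) (k - j) * (c s / q)

/-- Maximum of a real-valued function on a finite nonempty type. -/
noncomputable def maxOf [Nonempty S] (g : S → ℝ) : ℝ :=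
  Finset.univ.sup' Finset.univ_nonempty g

/-- `k` is `ε`-sufficient: `Σ_{n=0}^{k} ψ_{qt}(n) > qt − ε·q/(2·max_s c(s))`
(dropped if `max_s c(s) = 0`) and `ψ_{qt}(k)·max_s f(s) < ε/2`. -/
def EpsSufficient [Nonempty S] (q t : ℝ) (c f : S → ℝ) (ε : ℝ) (k : ℕ) : Prop :=
  (maxOf c = 0 ∨
    (∑ n ∈ Finset.range (k + 1), psi (q * t) n) > q * t - ε * q / (2 * maxOf c)) ∧
  psi (q * t) k * maxOf f < ε / 2

/-- `n`-step transition probabilities (matrix powers) of a stochastic matrix. -/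
noncomputable def matPow (P : S → S → ℝ) : ℕ → S → S → ℝ
  | 0 => fun s s' => if s = s' then 1 else 0
  | n + 1 => fun s s' => ∑ s'', matPow P n s s'' * P s'' s'

/-- `part` is a partition of the finite state set `S`. -/
def IsPartition (part : Finset (Finset S)) : Prop :=
  (∀ z ∈ part, z.Nonempty) ∧ (∀ s : S, ∃ z ∈ part, s ∈ z) ∧
  (∀ z ∈ part, ∀ z' ∈ part, z ≠ z' → Disjoint z z')

/-- Abstraction DTMDP of a stochastic matrix w.r.t. a partition: states are
blocks, actions are concrete states, `P̄(z, s, z') = Σ_{s' ∈ z'} P(s,s')` if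
`s ∈ z` and `0` otherwise. -/
noncomputable def abst (P : S → S → ℝ) (part : Finset (Finset S)) :
    {z // z ∈ part} → S → {z // z ∈ part} → ℝ :=
  fun z s z' => if s ∈ z.1 then ∑ s' ∈ z'.1, P s s' else 0

end TR

namespace TR

section ListsOfLength

variable {α : Type*} [Fintype α]

def listsOfLength : ℕ → Finset (List α)
  | 0 => {[]}
  | n + 1 => (Finset.univ ×ˢ listsOfLength n).map
      ⟨fun p => p.1 :: p.2, fun _ _ h => Prod.ext (List.cons.inj h).1 (List.cons.inj h).2⟩

theorem mem_listsOfLength {l : List α} {n : ℕ} : l ∈ listsOfLength n ↔ l.length = n := by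
  induction n generalizing l with
  | zero => simp [listsOfLength]
  | succ n ih =>
    rw [listsOfLength, Finset.mem_map]
    constructor
    · rintro ⟨⟨x, l'⟩, hl', rfl⟩
      exact congrArg (· + 1) (ih.1 (Finset.mem_product.1 hl').2)
    · intro hl
      cases l with
      | nil => simp at hl
      | cons x l =>
        exact ⟨(x, l), Finset.mem_product.2 ⟨Finset.mem_univ _, ih.2 (by simpa using hl)⟩,
          rfl⟩

theorem sum_listsOfLength_succ {M : Type*} [AddCommMonoid M] (n : ℕ) (g : List α → M) :
    ∑ l ∈ listsOfLength (n + 1), g l = ∑ x, ∑ l ∈ listsOfLength n, g (x :: l) := by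
  rw [listsOfLength, Finset.sum_map, Finset.sum_product]
  rfl

end ListsOfLength

section HR

variable {S A : Type} [DecidableEq S] (P : S → A → S → ℝ) (sch : List (S × A) × S → A → ℝ)
  (s0 : S)

theorem hrHistProb_eq_zero_of_length_ne {n : ℕ} {l : List (S × A)} (s : S)
    (hl : l.length ≠ n) : hrHistProb P sch s0 n (l, s) = 0 := by
  induction n generalizing l s with
  | zero => cases l <;> simp_all [hrHistProb]
  | succ n ih =>
    rcases l with _ | ⟨⟨s', a⟩, rest⟩
    · simp [hrHistProb]
    · simp [hrHistProb, ih s' (by simpa using hl)]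

variable [Fintype S] [Fintype A]

variable {P sch} in
theorem hrHistProb_nonneg (hP : ∀ s a s', 0 ≤ P s a s') (hsch : IsHR P sch) (n : ℕ)
    (h : List (S × A) × S) : 0 ≤ hrHistProb P sch s0 n h := by
  induction n generalizing h with
  | zero => unfold hrHistProb; positivity
  | succ n ih =>
    rcases h with ⟨_ | ⟨⟨s, a⟩, rest⟩, s'⟩
    · simp [hrHistProb]
    · exact mul_nonneg (mul_nonneg (ih _) (hsch.1 _ _)) (hP _ _ _)

theorem hrProb_eq_sum (n : ℕ) (s : S) :
    hrProb P sch s0 n s = ∑ l ∈ listsOfLength n, hrHistProb P sch s0 n (l, s) :=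
  tsum_eq_sum fun _ hl => hrHistProb_eq_zero_of_length_ne P sch s0 s (mt mem_listsOfLength.2 hl)

theorem hrProb_zero (s : S) : hrProb P sch s0 0 s = if s = s0 then 1 else 0 := by
  rw [hrProb_eq_sum, listsOfLength, Finset.sum_singleton]
  simp [hrHistProb]

noncomputable def hrJoint (n : ℕ) (s : S) (a : A) : ℝ :=
  ∑ l ∈ listsOfLength n, hrHistProb P sch s0 n (l, s) * sch (l, s) a

theorem hrProb_succ (n : ℕ) (s' : S) :
    hrProb P sch s0 (n + 1) s' = ∑ s, ∑ a, hrJoint P sch s0 n s a * P s a s' := by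
  simp only [hrProb_eq_sum, sum_listsOfLength_succ, Fintype.sum_prod_type, hrJoint,
    Finset.sum_mul, hrHistProb]

variable {P sch}

theorem sum_hrJoint (hsch : IsHR P sch) (n : ℕ) (s : S) :
    ∑ a, hrJoint P sch s0 n s a = hrProb P sch s0 n s := by
  simp only [hrJoint, hrProb_eq_sum]
  rw [Finset.sum_comm]
  simp only [← Finset.mul_sum, hsch.2.1, mul_one]

theorem hrJoint_nonneg (hP : ∀ s a s', 0 ≤ P s a s') (hsch : IsHR P sch) (n : ℕ) (s : S)
    (a : A) : 0 ≤ hrJoint P sch s0 n s a :=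
  Finset.sum_nonneg fun _ _ => mul_nonneg (hrHistProb_nonneg s0 hP hsch _ _) (hsch.1 _ _)

theorem hrProb_nonneg (hP : ∀ s a s', 0 ≤ P s a s') (hsch : IsHR P sch) (n : ℕ) (s : S) :
    0 ≤ hrProb P sch s0 n s :=
  sum_hrJoint s0 hsch n s ▸ Finset.sum_nonneg fun a _ => hrJoint_nonneg s0 hP hsch n s a

theorem enabled_of_hrJoint_ne_zero (hsch : IsHR P sch) {n : ℕ} {s : S} {a : A}
    (ha : hrJoint P sch s0 n s a ≠ 0) : Enabled P s a := by
  obtain ⟨l, -, hl⟩ := Finset.exists_ne_zero_of_sum_ne_zero ha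
  exact hsch.2.2 (l, s) a ((hsch.1 _ _).lt_of_ne' (right_ne_zero_of_mul hl))

end HR

section CR

variable {S A : Type} [Fintype S] [Fintype A] {P : S → A → S → ℝ}

theorem isHR_of_isCR {sch : S → ℕ → A → ℝ} (hsch : IsCR P sch) :
    IsHR P fun h => sch h.2 h.1.length :=
  ⟨fun _ _ => hsch.1 _ _ _, fun _ => hsch.2.1 _ _, fun _ _ => hsch.2.2 _ _ _⟩

variable [DecidableEq S]

theorem hrProb_of_isCR (sch : S → ℕ → A → ℝ) (s0 : S) :
    hrProb P (fun h => sch h.2 h.1.length) s0 = crProb P sch s0 := by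
  funext n
  induction n with
  | zero => funext s; simp [hrProb_zero, crProb]
  | succ n ih =>
    funext s'
    have hjoint : ∀ s a, hrJoint P (fun h => sch h.2 h.1.length) s0 n s a
        = crProb P sch s0 n s * sch s n a := by
      intro s a
      rw [← ih, hrProb_eq_sum, hrJoint, Finset.sum_mul]
      exact Finset.sum_congr rfl fun l hl => by rw [mem_listsOfLength.1 hl]
    simp only [hrProb_succ, crProb, hjoint, Finset.mul_sum, mul_assoc]

/-- Where `s` is unreachable at step `n`, the choice of `sch` at the empty history stands in for
the undefined conditional probability. -/
noncomputable def crOfHR (P : S → A → S → ℝ) (sch : List (S × A) × S → A → ℝ) (s0 : S) :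
    S → ℕ → A → ℝ :=
  fun s n a => if hrProb P sch s0 n s = 0 then sch ([], s) a
    else hrJoint P sch s0 n s a / hrProb P sch s0 n s

theorem isCR_crOfHR (hP : ∀ s a s', 0 ≤ P s a s') {sch : List (S × A) × S → A → ℝ}
    (hsch : IsHR P sch) (s0 : S) : IsCR P (crOfHR P sch s0) := by
  refine ⟨fun s n a => ?_, fun s n => ?_, fun s n a ha => ?_⟩ <;> unfold crOfHR at * <;>
    split_ifs at * with hp
  · exact hsch.1 _ _
  · exact div_nonneg (hrJoint_nonneg s0 hP hsch n s a)
      (hrProb_nonneg s0 hP hsch n s)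
  · exact hsch.2.1 _
  · rw [← Finset.sum_div, sum_hrJoint s0 hsch, div_self hp]
  · exact hsch.2.2 _ _ ha
  · exact enabled_of_hrJoint_ne_zero s0 hsch (left_ne_zero_of_mul ha.ne')

theorem crProb_crOfHR (hP : ∀ s a s', 0 ≤ P s a s') {sch : List (S × A) × S → A → ℝ}
    (hsch : IsHR P sch) (s0 : S) : crProb P (crOfHR P sch s0) s0 = hrProb P sch s0 := by
  funext n
  induction n with
  | zero => funext s; simp [hrProb_zero, crProb]
  | succ n ih =>
    funext s'
    rw [hrProb_succ, crProb, ih]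
    refine Finset.sum_congr rfl fun s _ => ?_
    by_cases hp : hrProb P sch s0 n s = 0
    · have hjoint : ∀ a, hrJoint P sch s0 n s a = 0 := fun a =>
        (Finset.sum_eq_zero_iff_of_nonneg fun a _ => hrJoint_nonneg s0 hP hsch n s a).1
          (sum_hrJoint s0 hsch n s ▸ hp) a (Finset.mem_univ a)
      simp [hp, hjoint]
    · simp only [crOfHR, if_neg hp, Finset.mul_sum]
      refine Finset.sum_congr rfl fun a _ => ?_
      field_simp

end CR

theorem range_hrProb_eq_range_crProb {S A : Type} [Fintype S] [Fintype A] [DecidableEq S]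
    {P : S → A → S → ℝ} (hP : ∀ s a s', 0 ≤ P s a s') (s0 : S) :
    Set.range (fun sch : {sch // IsHR P sch} => hrProb P sch.1 s0) =
      Set.range (fun sch : {sch // IsCR P sch} => crProb P sch.1 s0) := by
  refine Set.Subset.antisymm ?_ ?_ <;> rintro _ ⟨⟨sch, hsch⟩, rfl⟩
  · exact ⟨⟨crOfHR P sch s0, isCR_crOfHR hP hsch s0⟩, crProb_crOfHR hP hsch s0⟩
  · exact ⟨⟨_, isHR_of_isCR hsch⟩, hrProb_of_isCR sch s0⟩

theorem stmt7_general {S A : Type} [Fintype S] [Fintype A] [DecidableEq S]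
    (P : S → A → S → ℝ) (hP : IsDTMDP P)
    (q t : ℝ)
    (c f : S → ℝ) (s0 : S) :
    (⨆ sch : {sch : List (S × A) × S → A → ℝ // IsHR P sch},
      value q t c f (hrProb P sch.1 s0)) =
    ⨆ sch' : {sch' : S → ℕ → A → ℝ // IsCR P sch'},
      value q t c f (crProb P sch'.1 s0) := by
  rw [iSup, iSup, Set.range_comp' (value q t c f), Set.range_comp' (value q t c f),
    range_hrProb_eq_range_crProb hP.1 s0]

/-- the supremum of the value over HR schedulers equals the
supremum over CR schedulers. -/
theorem stmt7 {S A : Type} [Fintype S] [Fintype A] [DecidableEq S] [DecidableEq A]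
    (P : S → A → S → ℝ) (hP : IsDTMDP P)
    (q t : ℝ) (hq : 0 < q) (ht : 0 ≤ t)
    (c f : S → ℝ) (hc : ∀ s, 0 ≤ c s) (hf : ∀ s, 0 ≤ f s) (s0 : S) :
    (⨆ sch : {sch : List (S × A) × S → A → ℝ // IsHR P sch},
      value q t c f (hrProb P sch.1 s0)) =
    ⨆ sch' : {sch' : S → ℕ → A → ℝ // IsCR P sch'},
      value q t c f (crProb P sch'.1 s0) :=
  stmt7_general P hP q t c f s0

end TR
end

section
/- Let a finite DTMDP with uniformisation rate q > 0, time bound t ≥ 0 and reward structure (c, f) be given, with max_s c(s) > 0, and let ε > 0. If k ∈ ℕ satisfies Σ_{n=0}^{k} ψ_{qt}(n) > qt − ε·q/(2·max_s c(s)) and ψ_{qt}(k)·max_s f(s) < ε/2, then for every counting randomised (CR) scheduler σ and every initial state s0, the tail of the value series is bounded: Σ_{i=k+1}^{∞} [ φ_{qt}(i)·Σ_s p_i^σ(s)·f(s) + ψ_{qt}(i)·Σ_s p_i^σ(s)·c(s)/q ] < ε. -/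
open scoped BigOperators

namespace TR

variable {S A : Type} [Fintype S] [Fintype A] [DecidableEq S] [DecidableEq A]

/-! Every transient distribution is a probability distribution, so the expected rewards at each
step are bounded by `max f` and `max c`. The `φ`-tail beyond `k` then sums to `ψ(k)`, and the
`ψ`-tail is at most `qt − ∑_{n ≤ k} ψ(n)` because `∑_n ψ(n)` is bounded by the Poisson mean `qt`. -/

open Finset

section Poisson

lemma hasSum_phi (lam : ℝ) : HasSum (phi lam) 1 := by
  have h := (NormedSpace.expSeries_div_hasSum_exp lam).mul_right (Real.exp (-lam))
  rwa [← Real.exp_eq_exp_ℝ, ← Real.exp_add, add_neg_cancel, Real.exp_zero] at h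

lemma summable_phi (lam : ℝ) : Summable (phi lam) :=
  (hasSum_phi lam).summable

lemma phi_nonneg {lam : ℝ} (hlam : 0 ≤ lam) (i : ℕ) : 0 ≤ phi lam i := by
  unfold phi; positivity

lemma hasSum_phi_nat_add (lam : ℝ) (n : ℕ) :
    HasSum (fun i => phi lam (i + (n + 1))) (psi lam n) :=
  (hasSum_nat_add_iff' (n + 1)).mpr (hasSum_phi lam)

lemma psi_eq_tsum (lam : ℝ) (n : ℕ) : psi lam n = ∑' i, phi lam (i + (n + 1)) :=
  (hasSum_phi_nat_add lam n).tsum_eq.symm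

lemma psi_nonneg {lam : ℝ} (hlam : 0 ≤ lam) (n : ℕ) : 0 ≤ psi lam n :=
  (hasSum_phi_nat_add lam n).nonneg fun _ => phi_nonneg hlam _

lemma succ_mul_phi_succ (lam : ℝ) (j : ℕ) :
    ((j : ℝ) + 1) * phi lam (j + 1) = lam * phi lam j := by
  simp only [phi, Nat.factorial_succ, pow_succ]
  push_cast
  field_simp

lemma hasSum_nat_mul_phi (lam : ℝ) : HasSum (fun j : ℕ => (j : ℝ) * phi lam j) lam := by
  refine (hasSum_nat_add_iff' 1).mp ?_
  simpa [succ_mul_phi_succ] using (hasSum_phi lam).mul_left lam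

lemma sum_range_psi (lam : ℝ) (N : ℕ) :
    ∑ n ∈ range N, psi lam n
      = ∑ j ∈ range N, (j : ℝ) * phi lam j + N * ∑' i, phi lam (i + N) := by
  induction N with
  | zero => simp
  | succ N ih =>
    have hsplit : ∑' i, phi lam (i + N) = phi lam N + ∑' i, phi lam (i + (N + 1)) := by
      rw [((summable_nat_add_iff N).2 (summable_phi lam)).tsum_eq_zero_add]
      simp only [zero_add, add_assoc, add_comm 1 N]
    rw [sum_range_succ, ih, psi_eq_tsum, sum_range_succ, hsplit]
    push_cast
    ring

/-- `∑_{n<N} ψ(n) = ∑_j min(j, N) φ(j)`, which is at most the Poisson mean. -/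
lemma sum_range_psi_le {lam : ℝ} (hlam : 0 ≤ lam) (N : ℕ) :
    ∑ n ∈ range N, psi lam n ≤ lam := by
  have hmean := (hasSum_nat_mul_phi lam).summable
  have htail : N * ∑' i, phi lam (i + N) ≤ ∑' i : ℕ, ((i + N : ℕ) : ℝ) * phi lam (i + N) := by
    rw [← tsum_mul_left]
    refine Summable.tsum_le_tsum (fun i => ?_)
      (((summable_nat_add_iff N).2 (summable_phi lam)).mul_left _)
      ((summable_nat_add_iff N).2 hmean)
    gcongr
    · exact phi_nonneg hlam _
    · omega
  have hsplit := hmean.sum_add_tsum_nat_add N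
  rw [(hasSum_nat_mul_phi lam).tsum_eq] at hsplit
  rw [sum_range_psi]
  linarith

lemma summable_psi {lam : ℝ} (hlam : 0 ≤ lam) : Summable (psi lam) :=
  summable_of_sum_range_le (psi_nonneg hlam) (sum_range_psi_le hlam)

lemma tsum_psi_nat_add_le {lam : ℝ} (hlam : 0 ≤ lam) (N : ℕ) :
    ∑' i, psi lam (i + N) ≤ lam - ∑ n ∈ range N, psi lam n := by
  have htotal := Real.tsum_le_of_sum_range_le (psi_nonneg hlam) (sum_range_psi_le hlam)
  have hsplit := (summable_psi hlam).sum_add_tsum_nat_add N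
  linarith

lemma tsum_phi_mul_add_psi_mul_le {lam : ℝ} (hlam : 0 ≤ lam) (k : ℕ) {a b : ℕ → ℝ} {A B : ℝ}
    (ha0 : ∀ i, 0 ≤ a i) (ha : ∀ i, a i ≤ A) (hb0 : ∀ i, 0 ≤ b i) (hb : ∀ i, b i ≤ B) :
    ∑' i, (phi lam (i + (k + 1)) * a (i + (k + 1)) + psi lam (i + (k + 1)) * b (i + (k + 1)))
      ≤ psi lam k * A + (∑' i, psi lam (i + (k + 1))) * B := by
  have hphi := (summable_nat_add_iff (k + 1)).2 (summable_phi lam)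
  have hpsi := (summable_nat_add_iff (k + 1)).2 (summable_psi hlam)
  have hbound := (hphi.mul_right A).add (hpsi.mul_right B)
  have hle : ∀ i, phi lam (i + (k + 1)) * a (i + (k + 1)) + psi lam (i + (k + 1)) * b (i + (k + 1))
      ≤ phi lam (i + (k + 1)) * A + psi lam (i + (k + 1)) * B := fun i => by
    gcongr
    exacts [phi_nonneg hlam _, ha _, psi_nonneg hlam _, hb _]
  have hnonneg : ∀ i,
      0 ≤ phi lam (i + (k + 1)) * a (i + (k + 1)) + psi lam (i + (k + 1)) * b (i + (k + 1)) :=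
    fun i => by
      have := phi_nonneg hlam (i + (k + 1))
      have := psi_nonneg hlam (i + (k + 1))
      have := ha0 (i + (k + 1))
      have := hb0 (i + (k + 1))
      positivity
  calc _ ≤ ∑' i, (phi lam (i + (k + 1)) * A + psi lam (i + (k + 1)) * B) :=
        Summable.tsum_le_tsum hle (hbound.of_nonneg_of_le hnonneg hle) hbound
    _ = psi lam k * A + (∑' i, psi lam (i + (k + 1))) * B := by
        rw [(hphi.mul_right A).tsum_add (hpsi.mul_right B), tsum_mul_right, tsum_mul_right,
          ← psi_eq_tsum]

end Poisson

section Scheduler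

variable {S A : Type} [Fintype S] [Fintype A]

lemma crProb_nonneg [DecidableEq S] {P : S → A → S → ℝ} (hP : IsDTMDP P) {sch : S → ℕ → A → ℝ}
    (hsch : IsCR P sch) (s0 : S) (n : ℕ) (s : S) : 0 ≤ crProb P sch s0 n s := by
  induction n generalizing s with
  | zero => unfold crProb; positivity
  | succ n ih =>
    exact sum_nonneg fun s' _ => mul_nonneg (ih s')
      (sum_nonneg fun a _ => mul_nonneg (hsch.1 s' n a) (hP.1 s' a s))

/-- Actions outside the support of `sch s n` may be disabled, but carry no weight. -/
lemma sum_sum_sch_mul_eq_one {P : S → A → S → ℝ} {sch : S → ℕ → A → ℝ} (hsch : IsCR P sch)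
    (s : S) (n : ℕ) : ∑ s', ∑ a, sch s n a * P s a s' = 1 := by
  rw [sum_comm, ← hsch.2.1 s n]
  refine sum_congr rfl fun a _ => ?_
  rw [← mul_sum]
  rcases (hsch.1 s n a).lt_or_eq with hpos | hzero
  · rw [hsch.2.2 s n a hpos, mul_one]
  · rw [← hzero, zero_mul]

lemma sum_crProb [DecidableEq S] {P : S → A → S → ℝ} {sch : S → ℕ → A → ℝ}
    (hsch : IsCR P sch) (s0 : S) (n : ℕ) : ∑ s, crProb P sch s0 n s = 1 := by
  induction n with
  | zero => simp [crProb]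
  | succ n ih =>
    simp only [crProb]
    rw [sum_comm, ← ih]
    exact sum_congr rfl fun s _ => by rw [← mul_sum, sum_sum_sch_mul_eq_one hsch, mul_one]

end Scheduler

lemma sum_mul_le_maxOf {S : Type} [Fintype S] [Nonempty S] {p : S → ℝ} (hp0 : ∀ s, 0 ≤ p s)
    (hp1 : ∑ s, p s = 1) (g : S → ℝ) : ∑ s, p s * g s ≤ maxOf g :=
  calc ∑ s, p s * g s ≤ ∑ s, p s * maxOf g :=
        sum_le_sum fun s _ => mul_le_mul_of_nonneg_left (le_sup' g (mem_univ s)) (hp0 s)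
    _ = maxOf g := by rw [← sum_mul, hp1, one_mul]

theorem stmt8_general {S A : Type} [Fintype S] [Nonempty S] [Fintype A]
    [DecidableEq S]
    (P : S → A → S → ℝ) (hP : IsDTMDP P)
    (q t : ℝ) (hq : 0 < q) (ht : 0 ≤ t)
    (c f : S → ℝ) (hc : ∀ s, 0 ≤ c s) (hf : ∀ s, 0 ≤ f s)
    (hcmax : 0 < maxOf c) (ε : ℝ) (k : ℕ)
    (hk1 : (∑ n ∈ Finset.range (k + 1), psi (q * t) n) >
      q * t - ε * q / (2 * maxOf c))
    (hk2 : psi (q * t) k * maxOf f < ε / 2)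
    (sch : S → ℕ → A → ℝ) (hsch : IsCR P sch) (s0 : S) :
    (∑' i : ℕ, (phi (q * t) (i + (k + 1)) * ∑ s, crProb P sch s0 (i + (k + 1)) s * f s
      + psi (q * t) (i + (k + 1)) *
          ∑ s, crProb P sch s0 (i + (k + 1)) s * (c s / q))) < ε := by
  have hlam : 0 ≤ q * t := mul_nonneg hq.le ht
  have hp0 := crProb_nonneg hP hsch s0
  have hp1 := sum_crProb hsch s0
  have hcost : ∀ n,
      ∑ s, crProb P sch s0 n s * (c s / q) = (∑ s, crProb P sch s0 n s * c s) / q := fun n => by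
    simp only [mul_div_assoc, sum_div]
  have htail : (∑' i, psi (q * t) (i + (k + 1))) * (maxOf c / q) < ε / 2 := by
    have hlt : ∑' i, psi (q * t) (i + (k + 1)) < ε * q / (2 * maxOf c) := by
      linarith [tsum_psi_nat_add_le hlam (k + 1)]
    calc _ < ε * q / (2 * maxOf c) * (maxOf c / q) := by gcongr
      _ = ε / 2 := by field_simp
  calc _ ≤ psi (q * t) k * maxOf f + (∑' i, psi (q * t) (i + (k + 1))) * (maxOf c / q) :=
        tsum_phi_mul_add_psi_mul_le hlam k
          (a := fun n => ∑ s, crProb P sch s0 n s * f s)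
          (b := fun n => ∑ s, crProb P sch s0 n s * (c s / q))
          (fun n => sum_nonneg fun s _ => mul_nonneg (hp0 n s) (hf s))
          (fun n => sum_mul_le_maxOf (hp0 n) (hp1 n) f)
          (fun n => sum_nonneg fun s _ => mul_nonneg (hp0 n s) (div_nonneg (hc s) hq.le))
          (fun n => hcost n ▸
            div_le_div_of_nonneg_right (sum_mul_le_maxOf (hp0 n) (hp1 n) c) hq.le)
    _ < ε / 2 + ε / 2 := add_lt_add hk2 htail
    _ = ε := add_halves ε

/-- tail bound for the value series of any CR scheduler when `k`
satisfies both ε-conditions (with `max_s c(s) > 0`). -/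
theorem stmt8 {S A : Type} [Fintype S] [Nonempty S] [Fintype A]
    [DecidableEq S] [DecidableEq A]
    (P : S → A → S → ℝ) (hP : IsDTMDP P)
    (q t : ℝ) (hq : 0 < q) (ht : 0 ≤ t)
    (c f : S → ℝ) (hc : ∀ s, 0 ≤ c s) (hf : ∀ s, 0 ≤ f s)
    (hcmax : 0 < maxOf c) (ε : ℝ) (hε : 0 < ε) (k : ℕ)
    (hk1 : (∑ n ∈ Finset.range (k + 1), psi (q * t) n) >
      q * t - ε * q / (2 * maxOf c))
    (hk2 : psi (q * t) k * maxOf f < ε / 2)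
    (sch : S → ℕ → A → ℝ) (hsch : IsCR P sch) (s0 : S) :
    (∑' i : ℕ, (phi (q * t) (i + (k + 1)) * ∑ s, crProb P sch s0 (i + (k + 1)) s * f s
      + psi (q * t) (i + (k + 1)) *
          ∑ s, crProb P sch s0 (i + (k + 1)) s * (c s / q))) < ε :=
  stmt8_general P hP q t hq ht c f hc hf hcmax ε k hk1 hk2 sch hsch s0

end TR
end
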